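/- Every element of a bi-gyrogroupoid has a unique two-sided inverse. -/

import Mathlib

/-- A bi-gyrogroupoid: a set `β` with a binary operation `add`, an identity `zero`,
and two families of gyrations `lgyr`, `rgyr` satisfying axioms (BG1)–(BG5). -/
structure IsBiGyrogroupoid {β : Type*} (add : β → β → β) (zero : β)
    (lgyr rgyr : β → β → β → β) : Prop where
  /-- (BG1) `zero` is a two-sided identity. -/
  zero_add : ∀ a, add zero a = a
  add_zero : ∀ a, add a zero = a
  /-- (BG2) every element has a left inverse. -/
  exists_left_inv : ∀ a, ∃ b, add b a = zero
  /-- (BG3) gyrations are automorphisms of `(β, add)`. -/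
  lgyr_bijective : ∀ a b, Function.Bijective (lgyr a b)
  rgyr_bijective : ∀ a b, Function.Bijective (rgyr a b)
  lgyr_add : ∀ a b x y, lgyr a b (add x y) = add (lgyr a b x) (lgyr a b y)
  rgyr_add : ∀ a b x y, rgyr a b (add x y) = add (rgyr a b x) (rgyr a b y)
  /-- (BG3) the bi-gyroassociative law. -/
  bgassoc : ∀ a b c, add (add a b) (lgyr a b c) = add (rgyr b c a) (add b c)
  /-- (BG4a) -/
  rgyr_red : ∀ a b, rgyr a b = rgyr (lgyr a b a) (add a b)
  /-- (BG4b) -/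
  lgyr_red : ∀ a b, lgyr a b = lgyr (lgyr a b a) (add a b)
  /-- (BG5) -/
  lgyr_zero : ∀ a, lgyr a zero = id
  rgyr_zero : ∀ a, rgyr a zero = id

/-! By the reduction axioms and (BG5), both gyrations generated by a pair with `b ⊕ a = 0` are
trivial. Bi-gyroassociativity then degenerates to the cancellation law
`rgyr[a,c]b ⊕ (a ⊕ c) = c`, from which the monoid argument "a left inverse equals a right
inverse" goes through. -/

namespace IsBiGyrogroupoid

variable {β : Type*} {add : β → β → β} {zero : β} {lgyr rgyr : β → β → β → β} {a b c : β}

theorem lgyr_eq_id_of_add_eq_zero (h : IsBiGyrogroupoid add zero lgyr rgyr)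
    (hba : add b a = zero) : lgyr b a = id := by
  rw [h.lgyr_red, hba, h.lgyr_zero]

theorem rgyr_eq_id_of_add_eq_zero (h : IsBiGyrogroupoid add zero lgyr rgyr)
    (hba : add b a = zero) : rgyr b a = id := by
  rw [h.rgyr_red, hba, h.rgyr_zero]

theorem rgyr_add_add_of_add_eq_zero (h : IsBiGyrogroupoid add zero lgyr rgyr)
    (hba : add b a = zero) (c : β) : add (rgyr a c b) (add a c) = c := by
  have := h.bgassoc b a c
  rwa [hba, h.zero_add, h.lgyr_eq_id_of_add_eq_zero hba, id, eq_comm] at this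

theorem left_inv_eq_right_inv (h : IsBiGyrogroupoid add zero lgyr rgyr)
    (hba : add b a = zero) (hac : add a c = zero) : b = c := by
  have := h.rgyr_add_add_of_add_eq_zero hba c
  rwa [hac, h.add_zero, h.rgyr_eq_id_of_add_eq_zero hac, id] at this

theorem add_eq_zero_of_add_eq_zero (h : IsBiGyrogroupoid add zero lgyr rgyr)
    (hba : add b a = zero) : add a b = zero := by
  obtain ⟨c, hcb⟩ := h.exists_left_inv b
  rwa [h.left_inv_eq_right_inv hcb hba] at hcb

end IsBiGyrogroupoid

/-- Every element of a bi-gyrogroupoid has a unique two-sided inverse. -/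
theorem biGyrogroupoid_unique_inverse {β : Type*} (add : β → β → β) (zero : β)
    (lgyr rgyr : β → β → β → β)
    (h : IsBiGyrogroupoid add zero lgyr rgyr) :
    ∀ a, ∃! b, add b a = zero ∧ add a b = zero := by
  intro a
  obtain ⟨b, hba⟩ := h.exists_left_inv a
  refine ⟨b, ⟨hba, h.add_eq_zero_of_add_eq_zero hba⟩, ?_⟩
  rintro b' ⟨-, hab'⟩
  exact (h.left_inv_eq_right_inv hba hab').symm
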